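/- Let p be an odd prime, and assume 2p^k > (p²-1)m + p(m-ℓ) + (p²-2)n + 1 with ℓ ≤ 2i ≤ 2pi ≤ m and n' = n + 2i + 1. Set q = 2pi + 2p^k - 2p^{k+1} + 2p^{k+2}. Then for all u, v, w ∈ ℕ with 1 ≤ u+v+w ≤ p-1: if w = 0 then (u+v+w)m + 2(u+vp+wp²)p^k + (u+v+w-1)(n'-1) < q, and if w ≠ 0 then 2ui + (v+w)ℓ + 2(u+pv+p²w)p^k > q. -/
import Mathlib
set_option maxHeartbeats 2000000 in

/-- Numerical gap computation from the proof of Lemma (power-delta): with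
`n' = n + 2i + 1` and `q = 2pi + 2p^k - 2p^(k+1) + 2p^(k+2)`, for all `u, v, w` with
`1 ≤ u+v+w ≤ p-1`: if `w = 0` then
`(u+v+w)m + 2(u+vp+wp²)p^k + (u+v+w-1)(n'-1) < q`, and if `w ≠ 0` then
`2ui + (v+w)ℓ + 2(u+pv+p²w)p^k > q`. -/
theorem stmt_13 (p ℓ m n i k : ℕ) (hp : p.Prime) (hodd : Odd p)
    (h1 : ℓ ≤ 2 * i) (h2 : 2 * i ≤ 2 * p * i) (h3 : 2 * p * i ≤ m)
    (hgap : 2 * p ^ k + p * ℓ > (p ^ 2 - 1) * m + p * m + (p ^ 2 - 2) * n + 1)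
    (n' q : ℕ) (hn' : n' = n + 2 * i + 1)
    (hq : q = 2 * p * i + 2 * p ^ k + 2 * p ^ (k + 2) - 2 * p ^ (k + 1)) :
    ∀ u v w : ℕ, 1 ≤ u + v + w → u + v + w ≤ p - 1 →
      (w = 0 →
        (u + v + w) * m + 2 * (u + v * p + w * p ^ 2) * p ^ k +
          (u + v + w - 1) * (n' - 1) < q) ∧
      (w ≠ 0 →
        2 * u * i + (v + w) * ℓ + 2 * (u + p * v + p ^ 2 * w) * p ^ k > q) := by
  have hp2 := hp.two_le
  have hpne2 : p ≠ 2 := by rintro rfl; exact (by decide : ¬ Odd 2) hodd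
  have hp3 : 3 ≤ p := by omega
  set A := p ^ k with hA
  have hA1 : 1 ≤ A := Nat.one_le_pow _ _ (by omega)
  have e1 : p ^ (k+1) = p * A := by rw [hA]; ring
  have e2 : p ^ (k+2) = p * p * A := by rw [hA]; ring
  have e3 : p ^ 2 = p * p := by ring
  rw [e1, e2] at hq
  rw [e3] at hgap
  -- eliminate subtractions in hgap
  have s1 : (p * p - 1) * m = p * p * m - m := by rw [Nat.sub_mul, one_mul]
  have s2 : (p * p - 2) * n = p * p * n - 2 * n := by rw [Nat.sub_mul]
  have hm9 : 3 * m ≤ p * p * m := Nat.mul_le_mul_right m (by nlinarith)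
  have hn9 : 3 * n ≤ p * p * n := Nat.mul_le_mul_right n (by nlinarith)
  rw [s1, s2] at hgap
  have hplm : p * ℓ ≤ m := le_trans (by nlinarith) h3
  have hK2 : p * p * m + p * m + p * p * n + 2 ≤ 2 * A + 2 * m + 2 * n := by omega
  have hpp : p ≤ p * p := by nlinarith
  have hle : p * A ≤ p * p * A := Nat.mul_le_mul_right A hpp
  have hq2 : q + 2 * (p * A) = 2 * p * i + 2 * A + 2 * (p * p * A) := by omega
  have hA2 : 2 * p * i + 2 ≤ 2 * A := by nlinarith
  intro u v w hlo hhi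
  constructor
  · rintro rfl
    obtain ⟨t, ht⟩ : ∃ t, u + v = t + 1 := ⟨u + v - 1, by omega⟩
    have htp : t + 2 ≤ p := by omega
    simp only [add_zero, zero_mul, hn']
    rw [ht]
    simp only [Nat.add_sub_cancel]
    -- goal : (t+1)*m + 2*(u+v*p+0*p^2)*A + t*(n+2*i) < q
    have hup : u ≤ u * p := Nat.le_mul_of_pos_right u (by omega)
    have hb2 : u + v * p + p ≤ (t + 2) * p := by
      have he : (t + 2) * p = u * p + v * p + p := by
        rw [show t + 2 = u + v + 1 by omega]; ring
      linarith
    have hb3 : (t + 2) * p ≤ p * p := Nat.mul_le_mul_right p (by omega)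
    have hb4 : 2 * (u + v * p) * A + 2 * (p * A) ≤ 2 * (p * p * A) := by
      have := Nat.mul_le_mul_right A (show u + v * p + p ≤ p * p by linarith)
      nlinarith
    have hti : t * (2 * i) ≤ 2 * p * i := by
      calc t * (2 * i) ≤ p * (2 * i) := Nat.mul_le_mul_right _ (by omega)
        _ = 2 * p * i := by ring
    have hf1 : (t + 3) * m ≤ p * p * m + p * m := by
      calc (t + 3) * m ≤ (p * p + p) * m := Nat.mul_le_mul_right m (by nlinarith)
        _ = p * p * m + p * m := by ring
    have hf2 : (t + 2) * n ≤ p * p * n := Nat.mul_le_mul_right n (by nlinarith)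
    have hfin : (t + 1) * m + t * (n + 2 * i) + 2 ≤ 2 * A + 2 * p * i := by
      have hx : t * (n + 2 * i) = t * n + t * (2 * i) := by ring
      linarith
    linarith [hb4, hfin, hq2]
  · intro hw
    have hw1 : 1 ≤ w := Nat.one_le_iff_ne_zero.mpr hw
    rw [e3]
    have hww : 2 * (p * p) * A ≤ 2 * (u + p * v + p * p * w) * A := by
      apply Nat.mul_le_mul_right
      nlinarith [Nat.le_mul_of_pos_right (p * p) hw1]
    have hpA : 3 * A ≤ p * A := Nat.mul_le_mul_right A hp3
    nlinarith [hq2, hww, hpA, hA2, hA1, Nat.zero_le A]
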